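/- Let A be a unital C*-algebra, a a nonzero positive element of A, and x, y, z ∈ A admitting a-adjoints x^{#a}, y^{#a}, z^{#a}, with all the a-seminorms appearing below finite and ‖y‖_a ≤ 1. Then v_a(x y z^{#a}) ≤ (‖y‖_a / 2)·‖x x^{#a} + z z^{#a}‖_a. -/

import Mathlib

/-!
Fix a state `f ∈ S_a(A)`. Since `a ≥ 0`, `(u, v) ↦ f (v* a u)` is a positive semidefinite
sesquilinear form, and `a x y z^{#a} = (x^{#a})* a (y z^{#a})`, so Cauchy–Schwarz gives
`|f (a x y z^{#a})|² ≤ f ((y z^{#a})* a (y z^{#a})) · q` with `q = f ((x^{#a})* a x^{#a})`.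
Conjugating `f` by `z^{#a}` gives a positive functional, and `‖y‖ₐ` bounds `y* a y` against every
positive functional relative to its value at `a`; hence the first factor is at most `‖y‖ₐ² p` with
`p = f ((z^{#a})* a z^{#a})`. Finally `4 p q ≤ (p + q)²` and
`p + q = f (a (x x^{#a} + z z^{#a})) ≤ ‖x x^{#a} + z z^{#a}‖ₐ`, again by Cauchy–Schwarz.
-/

open scoped ComplexOrder

section

variable {A : Type*} [CStarAlgebra A] [PartialOrder A] [StarOrderedRing A]

/-- A positive linear functional on `A`: `f (x* x) ≥ 0` for all `x`. -/
def IsPosLF (f : A →ₗ[ℂ] ℂ) : Prop := ∀ x : A, 0 ≤ f (star x * x)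

/-- Membership in `S_a(A)`: positive linear functionals `f` with `f a = 1`. -/
def MemSa (a : A) (f : A →ₗ[ℂ] ℂ) : Prop := IsPosLF f ∧ f a = 1

/-- The set of values whose supremum is the `a`-seminorm `‖x‖ₐ`. -/
def aNormSet (a x : A) : Set ℝ :=
  {r : ℝ | ∃ f : A →ₗ[ℂ] ℂ, MemSa a f ∧ r = Real.sqrt (f (star x * a * x)).re}

/-- The `a`-seminorm `‖x‖ₐ = sup {√(f(x* a x)) : f ∈ S_a(A)}`. -/
noncomputable def aNorm (a x : A) : ℝ := sSup (aNormSet a x)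

/-- The `a`-numerical radius `vₐ(x) = sup {|f(a x)| : f ∈ S_a(A)}`. -/
noncomputable def aNR (a x : A) : ℝ :=
  sSup {r : ℝ | ∃ f : A →ₗ[ℂ] ℂ, MemSa a f ∧ r = ‖f (a * x)‖}

end

lemma le_of_forall_add_mul_le {α β γ δ : ℝ} (h : ∀ t ≥ 0, α + t * β ≤ γ + t * δ) : β ≤ δ := by
  by_contra! hlt
  have hpos : 0 < β - δ := sub_pos.mpr hlt
  have := h ((|γ - α| + 1) / (β - δ)) (by positivity)
  have hcancel : (|γ - α| + 1) / (β - δ) * (β - δ) = |γ - α| + 1 := div_mul_cancel₀ _ hpos.ne'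
  nlinarith [le_abs_self (γ - α)]

lemma IsSelfAdjoint.star_mul_eq_mul_of_mul_eq_star_mul {R : Type*} [Mul R] [StarMul R]
    {a b c : R} (ha : IsSelfAdjoint a) (h : a * b = star c * a) : star b * a = a * c := by
  simpa [ha.star_eq] using congrArg star h

section

variable {A : Type*} [CStarAlgebra A]

lemma IsPosLF.add {f g : A →ₗ[ℂ] ℂ} (hf : IsPosLF f) (hg : IsPosLF g) : IsPosLF (f + g) :=
  fun x ↦ add_nonneg (hf x) (hg x)

lemma IsPosLF.smul {f : A →ₗ[ℂ] ℂ} (hf : IsPosLF f) {c : ℂ} (hc : 0 ≤ c) : IsPosLF (c • f) :=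
  fun x ↦ mul_nonneg hc (hf x)

lemma IsPosLF.comp_mulLeftRight_star {f : A →ₗ[ℂ] ℂ} (hf : IsPosLF f) (c : A) :
    IsPosLF (f ∘ₗ LinearMap.mulLeftRight ℂ (star c, c)) := fun w ↦ by
  simpa [star_mul, mul_assoc] using hf (w * c)

lemma aNorm_nonneg (a x : A) : 0 ≤ aNorm a x :=
  Real.sSup_nonneg (by rintro r ⟨f, hf, rfl⟩; exact Real.sqrt_nonneg _)

lemma MemSa.re_apply_le_aNorm_sq {a y : A} {f : A →ₗ[ℂ] ℂ} (hf : MemSa a f)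
    (hy : BddAbove (aNormSet a y)) : (f (star y * a * y)).re ≤ aNorm a y ^ 2 :=
  (Real.sqrt_le_iff.mp (le_csSup hy ⟨f, hf, rfl⟩)).2

lemma IsPosLF.re_apply_le_aNorm_sq_mul {a y : A} {g : A →ₗ[ℂ] ℂ} (hg : IsPosLF g) {r : ℝ}
    (hr : 0 < r) (hga : g a = r) (hy : BddAbove (aNormSet a y)) :
    (g (star y * a * y)).re ≤ aNorm a y ^ 2 * r := by
  have hmem : MemSa a ((r⁻¹ : ℂ) • g) :=
    ⟨hg.smul (by exact_mod_cast (inv_pos.mpr hr).le), by simp [hga, hr.ne']⟩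
  have h := hmem.re_apply_le_aNorm_sq hy
  rw [LinearMap.smul_apply, smul_eq_mul, ← Complex.ofReal_inv, Complex.re_ofReal_mul] at h
  rwa [inv_mul_le_iff₀ hr, mul_comm] at h

variable [PartialOrder A] [StarOrderedRing A]

lemma IsPosLF.map_nonneg {f : A →ₗ[ℂ] ℂ} (hf : IsPosLF f) {b : A} (hb : 0 ≤ b) : 0 ≤ f b := by
  obtain ⟨s, rfl⟩ := CStarAlgebra.nonneg_iff_eq_star_mul_self.mp hb
  exact hf s

lemma IsPosLF.re_apply_star_mul_mul_nonneg {f : A →ₗ[ℂ] ℂ} (hf : IsPosLF f) {a : A} (ha : 0 ≤ a)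
    (u : A) : 0 ≤ (f (star u * a * u)).re :=
  (Complex.nonneg_iff.mp (hf.map_nonneg (star_left_conjugate_nonneg ha u))).1

lemma IsPosLF.norm_apply_star_mul_sq_le {f : A →ₗ[ℂ] ℂ} (hf : IsPosLF f) (p q : A) :
    ‖f (star p * q)‖ ^ 2 ≤ (f (star p * p)).re * (f (star q * q)).re := by
  let φ : A →ₚ[ℂ] ℂ := .mk₀ f fun _ ↦ hf.map_nonneg
  have h := inner_mul_inner_self_le (𝕜 := ℂ) (φ.toPreGNS p) (φ.toPreGNS q)
  rw [norm_inner_symm (φ.toPreGNS q), ← sq] at h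
  exact h

lemma IsPosLF.norm_apply_star_mul_mul_sq_le {f : A →ₗ[ℂ] ℂ} (hf : IsPosLF f) {a : A} (ha : 0 ≤ a)
    (u v : A) :
    ‖f (star v * a * u)‖ ^ 2 ≤ (f (star u * a * u)).re * (f (star v * a * v)).re := by
  obtain ⟨s, rfl⟩ := CStarAlgebra.nonneg_iff_eq_star_mul_self.mp ha
  have key (p q : A) : star p * (star s * s) * q = star (s * p) * (s * q) := by
    rw [star_mul]; noncomm_ring
  rw [key, key, key, mul_comm]
  exact hf.norm_apply_star_mul_sq_le (s * v) (s * u)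

/-- Apply the defining bound of `‖y‖ₐ` to the states `(f + t g) / (1 + t g(a))` and let
`t → ∞`. -/
lemma IsPosLF.re_apply_le_aNorm_sq_mul_re {a y : A} (ha : 0 ≤ a) {f g : A →ₗ[ℂ] ℂ}
    (hf : MemSa a f) (hg : IsPosLF g) (hy : BddAbove (aNormSet a y)) :
    (g (star y * a * y)).re ≤ aNorm a y ^ 2 * (g a).re := by
  have hga := Complex.nonneg_iff.mp (hg.map_nonneg ha)
  refine le_of_forall_add_mul_le (α := (f (star y * a * y)).re) (γ := aNorm a y ^ 2) fun t ht ↦ ?_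
  have h := (hf.1.add (hg.smul (Complex.zero_le_real.mpr ht))).re_apply_le_aNorm_sq_mul
    (r := 1 + t * (g a).re) (add_pos_of_pos_of_nonneg one_pos (mul_nonneg ht hga.1)) ?_ hy
  · simpa [mul_add, mul_left_comm] using h
  · apply Complex.ext <;> simp [hf.2, ← hga.2]

lemma MemSa.re_apply_mul_le_aNorm {a w : A} (ha : 0 ≤ a) {f : A →ₗ[ℂ] ℂ} (hf : MemSa a f)
    (hw : BddAbove (aNormSet a w)) : (f (a * w)).re ≤ aNorm a w := by
  have hcs := hf.1.norm_apply_star_mul_mul_sq_le ha w 1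
  rw [star_one, one_mul, mul_one, hf.2, Complex.one_re, mul_one] at hcs
  have hsq : ‖f (a * w)‖ ^ 2 ≤ aNorm a w ^ 2 := hcs.trans (hf.re_apply_le_aNorm_sq hw)
  exact (Complex.re_le_norm _).trans ((sq_le_sq₀ (norm_nonneg _) (aNorm_nonneg a w)).mp hsq)

lemma MemSa.norm_apply_mul_mul_mul_le {a x xadj y z zadj : A} (ha : 0 ≤ a) {f : A →ₗ[ℂ] ℂ}
    (hf : MemSa a f) (hx : star xadj * a = a * x) (hz : star zadj * a = a * z)
    (hy : BddAbove (aNormSet a y)) (hxz : BddAbove (aNormSet a (x * xadj + z * zadj))) :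
    ‖f (a * (x * y * zadj))‖ ≤ aNorm a y / 2 * aNorm a (x * xadj + z * zadj) := by
  set M := aNorm a y
  set N := aNorm a (x * xadj + z * zadj)
  set p := (f (star xadj * a * xadj)).re
  set q := (f (star zadj * a * zadj)).re
  have hp : 0 ≤ p := hf.1.re_apply_star_mul_mul_nonneg ha xadj
  have hq : 0 ≤ q := hf.1.re_apply_star_mul_mul_nonneg ha zadj
  have hyz : (f (star (y * zadj) * a * (y * zadj))).re ≤ M ^ 2 * q := by
    convert (hf.1.comp_mulLeftRight_star zadj).re_apply_le_aNorm_sq_mul_re ha hf hy using 2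
    simp only [LinearMap.comp_apply, LinearMap.mulLeftRight_apply, star_mul, mul_assoc]
    rfl
  have hpq : p + q ≤ N := by
    have h := hf.re_apply_mul_le_aNorm ha hxz
    rwa [mul_add, ← mul_assoc, ← mul_assoc, ← hx, ← hz, map_add, Complex.add_re] at h
  have hMN : 0 ≤ M / 2 * N :=
    mul_nonneg (div_nonneg (aNorm_nonneg a y) zero_le_two) (aNorm_nonneg _ _)
  rw [show a * (x * y * zadj) = star xadj * a * (y * zadj) by rw [hx]; noncomm_ring]
  refine (sq_le_sq₀ (norm_nonneg _) hMN).mp ?_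
  calc _ ≤ M ^ 2 * q * p :=
        (hf.1.norm_apply_star_mul_mul_sq_le ha (y * zadj) xadj).trans
          (mul_le_mul_of_nonneg_right hyz hp)
    _ = M ^ 2 / 4 * (4 * p * q) := by ring
    _ ≤ M ^ 2 / 4 * (p + q) ^ 2 := by gcongr; exact four_mul_le_sq_add p q
    _ ≤ M ^ 2 / 4 * N ^ 2 := by gcongr
    _ = (M / 2 * N) ^ 2 := by ring

theorem stmt15_general (a : A) (ha : 0 ≤ a)
    (x xadj y z zadj : A)
    (hxadj : a * xadj = star x * a)
    (hzadj : a * zadj = star z * a)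
    (hy : BddAbove (aNormSet a y))
    (hxz : BddAbove (aNormSet a (x * xadj + z * zadj))) :
    aNR a (x * y * zadj) ≤ (aNorm a y / 2) * aNorm a (x * xadj + z * zadj) := by
  have hsa : IsSelfAdjoint a := .of_nonneg ha
  refine Real.sSup_le ?_
    (mul_nonneg (div_nonneg (aNorm_nonneg a y) zero_le_two) (aNorm_nonneg _ _))
  rintro _ ⟨f, hf, rfl⟩
  exact hf.norm_apply_mul_mul_mul_le ha (hsa.star_mul_eq_mul_of_mul_eq_star_mul hxadj)
    (hsa.star_mul_eq_mul_of_mul_eq_star_mul hzadj) hy hxz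

/-- `vₐ(x y z^{#a}) ≤ (‖y‖ₐ/2) ‖x x^{#a} + z z^{#a}‖ₐ` when `‖y‖ₐ ≤ 1`. -/
theorem stmt15 (a : A) (ha : 0 ≤ a) (ha0 : a ≠ 0)
    (x xadj y yadj z zadj : A)
    (hxadj : a * xadj = star x * a) (hyadj : a * yadj = star y * a)
    (hzadj : a * zadj = star z * a)
    (hy : BddAbove (aNormSet a y))
    (hxz : BddAbove (aNormSet a (x * xadj + z * zadj)))
    (hy1 : aNorm a y ≤ 1) :
    aNR a (x * y * zadj) ≤ (aNorm a y / 2) * aNorm a (x * xadj + z * zadj) :=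
  stmt15_general a ha x xadj y z zadj hxadj hzadj hy hxz

end
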